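/- For any fixed constant c > 0, the function g(ℓ) = 2ℓ²·Φ(−c·ℓ/2) on (0, ∞) attains its global maximum at the unique point ℓ̂ = 2m̂/c, where m̂ is the unique positive real number satisfying 2Φ(−m̂) = m̂·φ(m̂); moreover the corresponding acceptance value satisfies 2Φ(−c·ℓ̂/2) = 2Φ(−m̂) and the maximal value is g(ℓ̂) = 8m̂²·Φ(−m̂)/c². -/

import Mathlib

open MeasureTheory

/-- The standard normal cumulative distribution function
`Φ(x) = ∫_{−∞}^x (2π)^{−1/2} e^{−t²/2} dt`. -/
noncomputable def Phi (x : ℝ) : ℝ :=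
  ∫ t in Set.Iic x, (Real.sqrt (2 * Real.pi))⁻¹ * Real.exp (-t ^ 2 / 2)

/-- The standard normal density `φ(x) = (2π)^{−1/2} e^{−x²/2}`. -/
noncomputable def phi (x : ℝ) : ℝ :=
  (Real.sqrt (2 * Real.pi))⁻¹ * Real.exp (-x ^ 2 / 2)

/-!
Substituting `x = c ℓ / 2` turns `g(ℓ)` into `(8 / c²) · x² Φ(-x)`, whose derivative is
`x · F(x)` with `F(x) = 2 Φ(-x) - x φ(x)`. Now `F > 0` on `(-∞, 0]`, `F' = (x² - 3) φ < 0` on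
`[0, √2]`, and `F < 0` on `[√2, ∞)` by the Mills-ratio bound `x Φ(-x) < φ(x)`. So `F` changes
sign exactly once, at `m̂`, which is therefore the strict global maximum of `x² Φ(-x)` on
`[0, ∞)`.
-/

open Set Filter Topology ProbabilityTheory

lemma phi_eq_gaussianPDFReal : phi = gaussianPDFReal 0 1 := by
  ext x; simp [phi, gaussianPDFReal]

lemma phi_pos (x : ℝ) : 0 < phi x :=
  phi_eq_gaussianPDFReal ▸ gaussianPDFReal_pos 0 1 x one_ne_zero

lemma integrable_phi : Integrable phi :=
  phi_eq_gaussianPDFReal ▸ integrable_gaussianPDFReal 0 1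

lemma continuous_phi : Continuous phi := by
  unfold phi; fun_prop

lemma phi_neg (x : ℝ) : phi (-x) = phi x := by
  simp [phi]

lemma hasDerivAt_phi (x : ℝ) : HasDerivAt phi (-x * phi x) x := by
  have hexp : HasDerivAt (fun t : ℝ => -t ^ 2 / 2) (-x) x :=
    (((hasDerivAt_pow 2 x).neg).div_const 2).congr_deriv (by push_cast; ring)
  exact (hexp.exp.const_mul _).congr_deriv (by simp only [phi]; ring)

lemma integrable_neg_mul_phi : Integrable (fun t : ℝ => -t * phi t) := by
  convert (integrable_mul_exp_neg_mul_sq (b := 1 / 2) (by norm_num)).const_mul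
    (-(Real.sqrt (2 * Real.pi))⁻¹) using 2 with t
  simp only [phi]; ring_nf

lemma integral_Iic_neg_mul_phi (a : ℝ) : ∫ t in Iic a, -t * phi t = phi a := by
  have hlim : Tendsto phi atBot (𝓝 0) :=
    tendsto_zero_of_hasDerivAt_of_integrableOn_Iic (a := 0) (fun x _ => hasDerivAt_phi x)
      integrable_neg_mul_phi.integrableOn integrable_phi.integrableOn
  simpa using integral_Iic_of_hasDerivAt_of_tendsto' (fun x _ => hasDerivAt_phi x)
    integrable_neg_mul_phi.integrableOn hlim

lemma setIntegral_Iic_pos {f : ℝ → ℝ} {a : ℝ} (hf : IntegrableOn f (Iic a))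
    (hpos : ∀ t < a, 0 < f t) : 0 < ∫ t in Iic a, f t := by
  rw [integral_Iic_eq_integral_Iio, setIntegral_pos_iff_support_of_nonneg_ae
    ((ae_restrict_mem measurableSet_Iio).mono fun t ht => (hpos t ht).le)
    (hf.mono_set Iio_subset_Iic_self)]
  calc (0 : ENNReal) < volume (Iio a) := by simp
    _ ≤ _ := measure_mono fun t (ht : t < a) =>
      show t ∈ Function.support f ∩ Iio a from ⟨(hpos t ht).ne', ht⟩

lemma Phi_pos (x : ℝ) : 0 < Phi x :=
  setIntegral_Iic_pos integrable_phi.integrableOn fun t _ => phi_pos t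

lemma hasDerivAt_Phi (x : ℝ) : HasDerivAt Phi (phi x) x := by
  have hPhi : Phi = fun y => Phi 0 + ∫ t in (0 : ℝ)..y, phi t := by
    funext y
    rw [← intervalIntegral.integral_Iic_sub_Iic integrable_phi.integrableOn
      integrable_phi.integrableOn]
    simp only [Phi, phi]
    ring
  rw [hPhi]
  exact (intervalIntegral.integral_hasDerivAt_right integrable_phi.intervalIntegrable
    (continuous_phi.stronglyMeasurableAtFilter _ _) continuous_phi.continuousAt).const_add _

lemma hasDerivAt_Phi_neg (x : ℝ) : HasDerivAt (fun y => Phi (-y)) (-phi x) x := by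
  simpa [Function.comp_def, phi_neg] using (hasDerivAt_Phi (-x)).comp x (hasDerivAt_neg x)

theorem mul_Phi_neg_lt_phi (x : ℝ) : x * Phi (-x) < phi x := by
  have hsplit : ∫ t in Iic (-x), (-t - x) * phi t = phi x - x * Phi (-x) := by
    simp_rw [sub_mul]
    rw [integral_sub integrable_neg_mul_phi.integrableOn
      (integrable_phi.const_mul x).integrableOn, integral_Iic_neg_mul_phi, phi_neg,
      integral_const_mul]
    rfl
  have hint : Integrable (fun t => (-t - x) * phi t) := by
    refine (integrable_neg_mul_phi.sub (integrable_phi.const_mul x)).congr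
      (.of_forall fun t => ?_)
    simp only [Pi.sub_apply]; ring
  have := setIntegral_Iic_pos hint.integrableOn fun t (ht : t < -x) =>
    mul_pos (by linarith) (phi_pos t)
  linarith

noncomputable def rescaledSpeed (x : ℝ) : ℝ := x ^ 2 * Phi (-x)

noncomputable def stationarityGap (x : ℝ) : ℝ := 2 * Phi (-x) - x * phi x

lemma hasDerivAt_rescaledSpeed (x : ℝ) :
    HasDerivAt rescaledSpeed (x * stationarityGap x) x :=
  ((hasDerivAt_pow 2 x).mul (hasDerivAt_Phi_neg x)).congr_deriv (by
    simp only [stationarityGap]; push_cast; ring)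

lemma continuous_rescaledSpeed : Continuous rescaledSpeed :=
  continuous_iff_continuousAt.2 fun x => (hasDerivAt_rescaledSpeed x).continuousAt

lemma hasDerivAt_stationarityGap (x : ℝ) :
    HasDerivAt stationarityGap ((x ^ 2 - 3) * phi x) x :=
  (((hasDerivAt_Phi_neg x).const_mul 2).sub
    ((hasDerivAt_id x).mul (hasDerivAt_phi x))).congr_deriv (by simp only [id_eq]; ring)

lemma stationarityGap_pos_of_nonpos {x : ℝ} (hx : x ≤ 0) : 0 < stationarityGap x := by
  have := Phi_pos (-x)
  have := phi_pos x
  unfold stationarityGap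
  nlinarith

/-- By the Mills-ratio bound, `x · stationarityGap x < (2 - x²) φ(x)`. -/
lemma stationarityGap_neg_of_sqrt_two_le {x : ℝ} (hx : √2 ≤ x) : stationarityGap x < 0 := by
  have hx0 : 0 < x := (Real.sqrt_pos.2 two_pos).trans_le hx
  have hx2 : 2 ≤ x ^ 2 := by simpa using pow_le_pow_left₀ (Real.sqrt_nonneg 2) hx 2
  have := mul_Phi_neg_lt_phi x
  have := phi_pos x
  unfold stationarityGap
  nlinarith

lemma stationarityGap_strictAntiOn : StrictAntiOn stationarityGap (Icc 0 √2) := by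
  refine strictAntiOn_of_hasDerivWithinAt_neg (convex_Icc _ _)
    (fun x _ => (hasDerivAt_stationarityGap x).continuousAt.continuousWithinAt)
    (fun x _ => (hasDerivAt_stationarityGap x).hasDerivWithinAt) fun x hx => ?_
  rw [interior_Icc] at hx
  have hx2 : x ^ 2 < 2 := by simpa using pow_lt_pow_left₀ hx.2 hx.1.le two_ne_zero
  exact mul_neg_of_neg_of_pos (by linarith) (phi_pos x)

lemma mem_Ioo_of_stationarityGap_eq_zero {m : ℝ} (hm : stationarityGap m = 0) :
    m ∈ Ioo 0 √2 :=
  ⟨lt_of_not_ge fun h => (stationarityGap_pos_of_nonpos h).ne' hm,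
    lt_of_not_ge fun h => (stationarityGap_neg_of_sqrt_two_le h).ne hm⟩

lemma stationarityGap_pos_of_lt {m x : ℝ} (hm : stationarityGap m = 0) (hx : x < m) :
    0 < stationarityGap x := by
  obtain ⟨hm0, hm2⟩ := mem_Ioo_of_stationarityGap_eq_zero hm
  rcases le_or_gt x 0 with hx0 | hx0
  · exact stationarityGap_pos_of_nonpos hx0
  · rw [← hm]
    exact stationarityGap_strictAntiOn ⟨hx0.le, (hx.trans hm2).le⟩ ⟨hm0.le, hm2.le⟩ hx

lemma stationarityGap_neg_of_gt {m x : ℝ} (hm : stationarityGap m = 0) (hx : m < x) :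
    stationarityGap x < 0 := by
  obtain ⟨hm0, hm2⟩ := mem_Ioo_of_stationarityGap_eq_zero hm
  rcases le_or_gt √2 x with hx2 | hx2
  · exact stationarityGap_neg_of_sqrt_two_le hx2
  · rw [← hm]
    exact stationarityGap_strictAntiOn ⟨hm0.le, hm2.le⟩ ⟨(hm0.trans hx).le, hx2.le⟩ hx

lemma rescaledSpeed_lt_of_ne {m x : ℝ} (hm : stationarityGap m = 0) (hx : 0 ≤ x)
    (hxm : x ≠ m) : rescaledSpeed x < rescaledSpeed m := by
  have hm0 := (mem_Ioo_of_stationarityGap_eq_zero hm).1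
  rcases hxm.lt_or_gt with hlt | hgt
  · refine strictMonoOn_of_deriv_pos (convex_Icc 0 m) continuous_rescaledSpeed.continuousOn
      (fun y hy => ?_) ⟨hx, hlt.le⟩ ⟨hm0.le, le_rfl⟩ hlt
    rw [interior_Icc] at hy
    rw [(hasDerivAt_rescaledSpeed y).deriv]
    exact mul_pos hy.1 (stationarityGap_pos_of_lt hm hy.2)
  · refine strictAntiOn_of_deriv_neg (convex_Ici m) continuous_rescaledSpeed.continuousOn
      (fun y hy => ?_) self_mem_Ici hgt.le hgt
    rw [interior_Ici] at hy
    rw [(hasDerivAt_rescaledSpeed y).deriv]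
    exact mul_neg_of_pos_of_neg (hm0.trans hy) (stationarityGap_neg_of_gt hm hy)

theorem optimal_scaling_constant_roughness_general (c : ℝ) (hc : 0 < c)
    (m : ℝ) (hmeq : 2 * Phi (-m) = m * phi m) :
    (∀ ℓ : ℝ, 0 < ℓ →
        2 * ℓ ^ 2 * Phi (-(c * ℓ) / 2) ≤
          2 * (2 * m / c) ^ 2 * Phi (-(c * (2 * m / c)) / 2)) ∧
    (∀ ℓ : ℝ, 0 < ℓ →
        2 * ℓ ^ 2 * Phi (-(c * ℓ) / 2) =
            2 * (2 * m / c) ^ 2 * Phi (-(c * (2 * m / c)) / 2) →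
          ℓ = 2 * m / c) ∧
    2 * Phi (-(c * (2 * m / c)) / 2) = 2 * Phi (-m) ∧
    2 * (2 * m / c) ^ 2 * Phi (-(c * (2 * m / c)) / 2) = 8 * m ^ 2 * Phi (-m) / c ^ 2 := by
  have hm : stationarityGap m = 0 := sub_eq_zero.2 hmeq
  have hspeed (ℓ : ℝ) :
      2 * ℓ ^ 2 * Phi (-(c * ℓ) / 2) = 8 / c ^ 2 * rescaledSpeed (c * ℓ / 2) := by
    simp only [rescaledSpeed, neg_div]
    field_simp
    ring
  have hpeak : c * (2 * m / c) / 2 = m := by field_simp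
  have hpeak' : -(c * (2 * m / c)) / 2 = -m := by rw [neg_div, hpeak]
  refine ⟨fun ℓ hℓ => ?_, fun ℓ hℓ heq => ?_, by rw [hpeak'], by rw [hpeak']; ring⟩
  · rw [hspeed, hspeed, hpeak]
    rcases eq_or_ne (c * ℓ / 2) m with h | h
    · rw [h]
    · exact mul_le_mul_of_nonneg_left (rescaledSpeed_lt_of_ne hm (by positivity) h).le
        (by positivity)
  · rw [hspeed, hspeed, hpeak] at heq
    have hx : c * ℓ / 2 = m := by
      by_contra h
      exact (rescaledSpeed_lt_of_ne hm (by positivity) h).ne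
        (mul_left_cancel₀ (by positivity) heq)
    field_simp
    linarith

/-- For any fixed `c > 0`, the function `g(ℓ) = 2ℓ²·Φ(−c·ℓ/2)` on
`(0, ∞)` attains its global maximum at the unique point `ℓ̂ = 2m̂/c`, where `m̂` is the
unique positive real with `2Φ(−m̂) = m̂·φ(m̂)`; moreover `2Φ(−c·ℓ̂/2) = 2Φ(−m̂)` and the
maximal value is `g(ℓ̂) = 8m̂²·Φ(−m̂)/c²`. -/
theorem optimal_scaling_constant_roughness (c : ℝ) (hc : 0 < c)
    (m : ℝ) (hm : 0 < m) (hmeq : 2 * Phi (-m) = m * phi m) :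
    (∀ ℓ : ℝ, 0 < ℓ →
        2 * ℓ ^ 2 * Phi (-(c * ℓ) / 2) ≤
          2 * (2 * m / c) ^ 2 * Phi (-(c * (2 * m / c)) / 2)) ∧
    (∀ ℓ : ℝ, 0 < ℓ →
        2 * ℓ ^ 2 * Phi (-(c * ℓ) / 2) =
            2 * (2 * m / c) ^ 2 * Phi (-(c * (2 * m / c)) / 2) →
          ℓ = 2 * m / c) ∧
    2 * Phi (-(c * (2 * m / c)) / 2) = 2 * Phi (-m) ∧
    2 * (2 * m / c) ^ 2 * Phi (-(c * (2 * m / c)) / 2) = 8 * m ^ 2 * Phi (-m) / c ^ 2 :=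
  optimal_scaling_constant_roughness_general c hc m hmeq
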